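/- Let X be a path connected, locally path connected metric space. If there are no pairs of paths [0,1] → X that are close relative to the endpoints {0,1}, then X is homotopically path Hausdorff. -/

import Mathlib

/-- `X` is homotopically path Hausdorff: for every path `w` from `P` to `Q` and every
non-trivial `α ∈ π₁(X, P)` there are finitely many open sets `U₁,…,U_k` covering `w`
together with a partition `0 = t₀ < … < t_k = 1` with `w([t_{j-1},t_j]) ⊆ U_j` and
marked points `P_j ∈ w([t_{j-1},t_j])`, such that for every return path `v` from `Q`
to `P` compatible with the reversed cover, the concatenation `w * v` does not
represent `α`. -/
def HomotopicallyPathHausdorff (X : Type*) [TopologicalSpace X] : Prop :=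
  ∀ (P Q : X) (w : Path P Q) (α : Path P P), ¬α.Homotopic (Path.refl P) →
    ∃ (k : ℕ) (_ : 0 < k) (U : Fin k → Set X) (Pt : Fin k → X)
      (t : Fin (k + 1) → unitInterval),
        t 0 = 0 ∧ t (Fin.last k) = 1 ∧ StrictMono t ∧
        (∀ j : Fin k, IsOpen (U j) ∧
          ⇑w '' Set.Icc (t j.castSucc) (t j.succ) ⊆ U j ∧
          Pt j ∈ ⇑w '' Set.Icc (t j.castSucc) (t j.succ)) ∧
        ∀ v : Path Q P,
          (∀ j : Fin k, ⇑v '' Set.Icc (t j.castSucc) (t j.succ) ⊆ U j.rev ∧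
            Pt j.rev ∈ ⇑v '' Set.Icc (t j.castSucc) (t j.succ)) →
          ¬(w.trans v).Homotopic α

/-- `v` is close to `w` rel the endpoints `{0,1}`: not homotopic rel endpoints, but for
every `ε > 0` some path homotopic (rel endpoints) to `v` is uniformly `ε`-close to `w`. -/
def PathClose {X : Type*} [MetricSpace X] {P Q : X} (v w : Path P Q) : Prop :=
  ¬v.Homotopic w ∧
    ∀ ε > (0 : ℝ), ∃ v' : Path P Q, v'.Homotopic v ∧
      ∀ s : unitInterval, dist (w s) (v' s) < ε


/-
Write `u = w⁻¹ * α`; up to homotopy it is the only return path with `w * u ≃ α`, and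
`u ≄ w⁻¹` because `α` is non-trivial. As `u` and `w⁻¹` are not close, some `ε > 0` keeps every
representative of `[u]` at uniform distance `≥ ε` from `w⁻¹`. Cut `[0,1]` into `k` equal pieces
on each of which `w` oscillates by less than `ε / 2`, and let `U_j` be the `ε / 2`-ball around the
image of the left end of the `j`-th piece. A return path `v` that follows the reversed cover stays
within `ε` of `w⁻¹`, since the `j`-th piece is reflected by `s ↦ 1 - s` onto the `j.rev`-th one,
so `w * v ≄ α`.
-/

open Set unitInterval

namespace unitInterval

/-- For `k = 0` this is the one-point partition `0`, since `0 / 0 = 0` in `ℝ`. -/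
noncomputable def uniformPartition (k : ℕ) (j : Fin (k + 1)) : I :=
  ⟨((j : ℕ) : ℝ) / k, by positivity, div_le_one_of_le₀ (mod_cast j.is_le) k.cast_nonneg⟩

variable {k : ℕ}

@[simp]
lemma coe_uniformPartition (j : Fin (k + 1)) : (uniformPartition k j : ℝ) = j / k := rfl

lemma uniformPartition_zero : uniformPartition k 0 = 0 := by
  ext; simp

lemma uniformPartition_last (hk : k ≠ 0) : uniformPartition k (Fin.last k) = 1 := by
  ext; simp [hk]

lemma uniformPartition_strictMono (hk : k ≠ 0) : StrictMono (uniformPartition k) :=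
  fun i j hij ↦ show ((i : ℕ) : ℝ) / k < (j : ℕ) / k from
    div_lt_div_of_pos_right (mod_cast hij) (by positivity)

lemma uniformPartition_castSucc_mem_Icc (j : Fin k) :
    uniformPartition k j.castSucc ∈
      Icc (uniformPartition k j.castSucc) (uniformPartition k j.succ) :=
  left_mem_Icc.2 ((uniformPartition_strictMono j.pos.ne').monotone j.castSucc_le_succ)

lemma symm_uniformPartition (hk : k ≠ 0) (j : Fin (k + 1)) :
    σ (uniformPartition k j) = uniformPartition k j.rev := by
  ext
  rw [coe_symm_eq, coe_uniformPartition, coe_uniformPartition, Fin.val_rev,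
    show k + 1 - (j + 1) = k - j by omega, Nat.cast_sub j.is_le]
  field_simp

lemma symm_mem_Icc_uniformPartition (hk : k ≠ 0) {j : Fin k} {s : I}
    (hs : s ∈ Icc (uniformPartition k j.castSucc) (uniformPartition k j.succ)) :
    σ s ∈ Icc (uniformPartition k j.rev.castSucc) (uniformPartition k j.rev.succ) := by
  rw [← Fin.rev_succ, ← Fin.rev_castSucc, ← symm_uniformPartition hk,
    ← symm_uniformPartition hk]
  exact ⟨symm_le_symm.2 hs.2, symm_le_symm.2 hs.1⟩

lemma exists_mem_Icc_uniformPartition (hk : k ≠ 0) (s : I) :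
    ∃ j : Fin k, s ∈ Icc (uniformPartition k j.castSucc) (uniformPartition k j.succ) := by
  have hk' : (0 : ℝ) < k := by positivity
  have hsk : 0 ≤ (s : ℝ) * k := mul_nonneg s.2.1 hk'.le
  have hceil : ⌈(s : ℝ) * k⌉₊ ≤ k := Nat.ceil_le.2 (by nlinarith [s.2.2])
  refine ⟨⟨⌈(s : ℝ) * k⌉₊ - 1, by omega⟩, ?_, ?_⟩ <;>
    rw [← Subtype.coe_le_coe, coe_uniformPartition]
  · rw [div_le_iff₀ hk', Fin.val_castSucc]
    rcases Nat.eq_zero_or_pos ⌈(s : ℝ) * k⌉₊ with h0 | h0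
    · simpa [h0] using hsk
    · rw [Nat.cast_pred h0]
      linarith [Nat.ceil_lt_add_one hsk]
  · rw [le_div_iff₀ hk', Fin.val_succ]
    exact (Nat.le_ceil _).trans (by dsimp only; norm_cast; omega)

lemma dist_le_of_mem_Icc_uniformPartition {j : Fin k} {s s' : I}
    (hs : s ∈ Icc (uniformPartition k j.castSucc) (uniformPartition k j.succ))
    (hs' : s' ∈ Icc (uniformPartition k j.castSucc) (uniformPartition k j.succ)) :
    dist s s' ≤ 1 / k :=
  calc dist s s' ≤ uniformPartition k j.succ - uniformPartition k j.castSucc :=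
        Real.dist_le_of_mem_Icc hs hs'
    _ = 1 / k := by simp [Fin.val_succ]; ring

lemma exists_uniformPartition_dist_lt {X : Type*} [PseudoMetricSpace X] {f : I → X}
    (hf : Continuous f) {ε : ℝ} (hε : 0 < ε) :
    ∃ k ≠ 0, ∀ j : Fin k,
      ∀ s ∈ Icc (uniformPartition k j.castSucc) (uniformPartition k j.succ),
      ∀ s' ∈ Icc (uniformPartition k j.castSucc) (uniformPartition k j.succ),
        dist (f s) (f s') < ε := by
  obtain ⟨δ, hδ, hf⟩ := Metric.uniformContinuous_iff.1
    (CompactSpace.uniformContinuous_of_continuous hf) ε hε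
  obtain ⟨n, hn⟩ := exists_nat_one_div_lt hδ
  refine ⟨n + 1, n.succ_ne_zero, fun j s hs s' hs' ↦ hf ?_⟩
  exact (dist_le_of_mem_Icc_uniformPartition hs hs').trans_lt (mod_cast hn)

end unitInterval

theorem Path.trans_homotopic_iff {X : Type*} [TopologicalSpace X] {P Q R : X}
    (w : Path P Q) (v : Path Q R) (α : Path P R) :
    (w.trans v).Homotopic α ↔ v.Homotopic (w.symm.trans α) := by
  simp only [← Path.Homotopic.Quotient.eq, Path.Homotopic.Quotient.mk_trans,
    Path.Homotopic.Quotient.mk_symm]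
  constructor <;> intro h
  · simp [← h, ← Path.Homotopic.Quotient.trans_assoc]
  · simp [h, ← Path.Homotopic.Quotient.trans_assoc]

theorem no_close_paths_implies_hph_general {X : Type*} [MetricSpace X]
    (h : ∀ (P Q : X) (v w : Path P Q), ¬PathClose v w) :
    HomotopicallyPathHausdorff X := by
  intro P Q w α hα
  have hu : ¬(w.symm.trans α).Homotopic w.symm := fun hu ↦
    hα (((w.trans_homotopic_iff w.symm α).2 hu.symm).symm.trans (.trans_symm w))
  obtain ⟨ε, hε, hfar⟩ : ∃ ε > 0, ∀ v : Path Q P, v.Homotopic (w.symm.trans α) →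
      ∃ s, ε ≤ dist (w.symm s) (v s) := by
    have hclose := h Q P (w.symm.trans α) w.symm
    simp only [PathClose, hu, not_false_eq_true, true_and] at hclose
    push Not at hclose
    exact hclose
  obtain ⟨k, hk, hsmall⟩ := exists_uniformPartition_dist_lt w.continuous (half_pos hε)
  let t := uniformPartition k
  refine ⟨k, Nat.pos_of_ne_zero hk, fun j ↦ Metric.ball (w (t j.castSucc)) (ε / 2),
    fun j ↦ w (t j.castSucc), t, uniformPartition_zero, uniformPartition_last hk,
    uniformPartition_strictMono hk, fun j ↦ ⟨Metric.isOpen_ball, ?_,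
    mem_image_of_mem w (uniformPartition_castSucc_mem_Icc j)⟩, fun v hv hwv ↦ ?_⟩
  · rintro _ ⟨s, hs, rfl⟩
    exact hsmall j s hs _ (uniformPartition_castSucc_mem_Icc j)
  · obtain ⟨s, hs⟩ := hfar v ((w.trans_homotopic_iff v α).1 hwv)
    obtain ⟨j, hj⟩ := exists_mem_Icc_uniformPartition hk s
    have hvs : dist (v s) (w (t j.rev.castSucc)) < ε / 2 := (hv j).1 ⟨s, hj, rfl⟩
    have hw : dist (w.symm s) (w (t j.rev.castSucc)) < ε / 2 :=
      hsmall _ _ (symm_mem_Icc_uniformPartition hk hj) _ (uniformPartition_castSucc_mem_Icc _)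
    linarith [dist_triangle_right (w.symm s) (v s) (w (t j.rev.castSucc))]

/-- If a path connected, locally path connected metric space has no pair of close
paths rel the endpoints, then it is homotopically path Hausdorff. -/
theorem no_close_paths_implies_hph {X : Type*} [MetricSpace X] [PathConnectedSpace X]
    [LocallyPathConnectedSpace X]
    (h : ∀ (P Q : X) (v w : Path P Q), ¬PathClose v w) :
    HomotopicallyPathHausdorff X :=
  no_close_paths_implies_hph_general h
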